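/- Let s be nonzero, M symmetric positive definite, l = M s, and H symmetric positive definite. Then the BFGS inverse update H_next = (I − s l^T/(s^T l)) H (I − l s^T/(s^T l)) + s s^T/(s^T l) is symmetric positive definite. -/

import Mathlib

/-!
With `c = sᵀ l` and `B = I - l sᵀ / c`, the update is `Bᵀ H B + s sᵀ / c`, so its quadratic form
is `(B x)ᵀ H (B x) + (sᵀ x)² / c`. Here `c = sᵀ M s > 0`. If `sᵀ x ≠ 0` the second term is
positive; if `sᵀ x = 0` then `B x = x` and the first term is positive.
-/

open Matrix

noncomputable def bfgsUpdate {n : ℕ} (H : Matrix (Fin n) (Fin n) ℝ)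
    (s l : Fin n → ℝ) : Matrix (Fin n) (Fin n) ℝ :=
  (1 - (s ⬝ᵥ l)⁻¹ • Matrix.vecMulVec s l) * H * (1 - (s ⬝ᵥ l)⁻¹ • Matrix.vecMulVec l s)
    + (s ⬝ᵥ l)⁻¹ • Matrix.vecMulVec s s

section BFGSFactor

variable {ι : Type*} [Fintype ι] [DecidableEq ι]

noncomputable def bfgsFactor (s l : ι → ℝ) : Matrix ι ι ℝ :=
  1 - (s ⬝ᵥ l)⁻¹ • vecMulVec l s

lemma transpose_bfgsFactor (s l : ι → ℝ) :
    (bfgsFactor s l)ᵀ = 1 - (s ⬝ᵥ l)⁻¹ • vecMulVec s l := by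
  rw [bfgsFactor, transpose_sub, transpose_one, transpose_smul, transpose_vecMulVec]

lemma bfgsFactor_mulVec (s l x : ι → ℝ) :
    bfgsFactor s l *ᵥ x = x - ((s ⬝ᵥ l)⁻¹ * (s ⬝ᵥ x)) • l := by
  rw [bfgsFactor, sub_mulVec, one_mulVec, smul_mulVec, vecMulVec_mulVec, op_smul_eq_smul,
    smul_smul]

lemma bfgsFactor_mulVec_of_dotProduct_eq_zero {s l x : ι → ℝ} (hsx : s ⬝ᵥ x = 0) :
    bfgsFactor s l *ᵥ x = x := by
  simp [bfgsFactor_mulVec, hsx]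

end BFGSFactor

section BFGSUpdate

variable {n : ℕ}

lemma bfgsUpdate_eq (H : Matrix (Fin n) (Fin n) ℝ) (s l : Fin n → ℝ) :
    bfgsUpdate H s l =
      (bfgsFactor s l)ᵀ * H * bfgsFactor s l + (s ⬝ᵥ l)⁻¹ • vecMulVec s s := by
  rw [bfgsUpdate, transpose_bfgsFactor, bfgsFactor]

lemma dotProduct_bfgsUpdate_mulVec (H : Matrix (Fin n) (Fin n) ℝ) (s l x : Fin n → ℝ) :
    x ⬝ᵥ (bfgsUpdate H s l *ᵥ x) =
      bfgsFactor s l *ᵥ x ⬝ᵥ (H *ᵥ (bfgsFactor s l *ᵥ x)) + (s ⬝ᵥ l)⁻¹ * (s ⬝ᵥ x) ^ 2 := by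
  rw [bfgsUpdate_eq, add_mulVec, smul_mulVec, vecMulVec_mulVec, op_smul_eq_smul,
    ← mulVec_mulVec, ← mulVec_mulVec, dotProduct_add, dotProduct_mulVec, vecMul_transpose,
    dotProduct_smul, dotProduct_smul, dotProduct_comm x s, smul_eq_mul, smul_eq_mul, sq]

lemma isHermitian_bfgsUpdate {H : Matrix (Fin n) (Fin n) ℝ} (hH : H.IsHermitian)
    (s l : Fin n → ℝ) : (bfgsUpdate H s l).IsHermitian := by
  rw [bfgsUpdate_eq]
  have hss : (vecMulVec s s).IsHermitian := (posSemidef_vecMulVec_self_star s).isHermitian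
  exact (isHermitian_conjTranspose_mul_mul _ hH).add (hss.smul (.all _))

theorem posDef_bfgsUpdate {H : Matrix (Fin n) (Fin n) ℝ} (hH : H.PosDef) {s l : Fin n → ℝ}
    (hsl : 0 < s ⬝ᵥ l) : (bfgsUpdate H s l).PosDef := by
  refine .of_dotProduct_mulVec_pos (isHermitian_bfgsUpdate hH.isHermitian s l) fun x hx => ?_
  rw [star_trivial, dotProduct_bfgsUpdate_mulVec]
  by_cases hsx : s ⬝ᵥ x = 0
  · simpa [bfgsFactor_mulVec_of_dotProduct_eq_zero hsx, hsx] using hH.dotProduct_mulVec_pos hx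
  · have hcurv : 0 < (s ⬝ᵥ l)⁻¹ * (s ⬝ᵥ x) ^ 2 := by positivity
    have hquad := hH.posSemidef.dotProduct_mulVec_nonneg (bfgsFactor s l *ᵥ x)
    rw [star_trivial] at hquad
    linarith

end BFGSUpdate

theorem stmt_3 {n : ℕ} (M : Matrix (Fin n) (Fin n) ℝ) (hM : M.PosDef)
    (s : Fin n → ℝ) (hs : s ≠ 0) (l : Fin n → ℝ) (hl : l = M.mulVec s)
    (H : Matrix (Fin n) (Fin n) ℝ) (hH : H.PosDef) :
    (bfgsUpdate H s l).PosDef := by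
  have hsl : 0 < s ⬝ᵥ l := by simpa [hl] using hM.dotProduct_mulVec_pos hs
  exact posDef_bfgsUpdate hH hsl
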